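/- Let $p$ be prime, $g$ coprime to $p$ of multiplicative order $T$ mod $p$, and $a$ coprime to $p$. Let $\mathcal{L}$ be a set of positive integers of cardinality at most $K \le T$, contained in an interval of length at most $K$ inside $\{1,\ldots,T\}$, and let $(\varphi_x)_{x\in\mathcal{L}}$ satisfy $|\varphi_x| \le \Phi$. If $E_p(K) \le C K^{5/2}$, then $\sum_{m=0}^{p-1} \Big| \sum_{x\in\mathcal{L}} \varphi_x e_p(amg^x) \Big|^4 \le C'\, p\, \Phi^4 K^{5/2}$ for some constant $C'$ depending only on $C$. -/

import Mathlib

open Finset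

def addEnergy (p : ℕ) (g : ℤ) (K : ℕ) : ℕ :=
  ((Finset.Icc 1 K ×ˢ Finset.Icc 1 K ×ˢ Finset.Icc 1 K ×ˢ Finset.Icc 1 K).filter
    (fun q => (g : ZMod p) ^ q.1 + (g : ZMod p) ^ q.2.1
      = (g : ZMod p) ^ q.2.2.1 + (g : ZMod p) ^ q.2.2.2)).card

noncomputable def ep (p : ℕ) (z : ℤ) : ℂ := Complex.exp (2 * Real.pi * Complex.I * z / p)

lemma ep_add (p:ℕ) (z w : ℤ) : ep p (z+w) = ep p z * ep p w := by
  unfold ep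
  rw [← Complex.exp_add]
  congr 1
  push_cast
  ring

lemma ep_conj (p:ℕ) (z:ℤ) : (starRingEnd ℂ) (ep p z) = ep p (-z) := by
  unfold ep
  rw [← Complex.exp_conj]
  congr 1
  simp [map_div₀, Complex.conj_I, map_ofNat]

lemma ep_pow (p:ℕ) (c:ℤ) (m:ℕ) : ep p (c*m) = ep p c ^ m := by
  unfold ep
  rw [← Complex.exp_nat_mul]
  congr 1
  push_cast
  ring

lemma ep_orth (p:ℕ) (hp : 0 < p) (c:ℤ) :
    ∑ m ∈ Finset.range p, ep p (c*m) = if (p:ℤ) ∣ c then (p:ℂ) else 0 := by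
  have hp0 : (p:ℂ) ≠ 0 := Nat.cast_ne_zero.mpr hp.ne'
  have h2pi : (2*Real.pi*Complex.I : ℂ) ≠ 0 := by
    simp [Real.pi_ne_zero, Complex.I_ne_zero]
  simp only [ep_pow]
  split_ifs with h
  · obtain ⟨k, hk⟩ := h
    have hζ : ep p c = 1 := by
      unfold ep
      rw [hk]
      have : (2*Real.pi*Complex.I*((p*k:ℤ):ℂ))/p = (k:ℂ)*(2*Real.pi*Complex.I) := by
        push_cast; field_simp
      rw [this, Complex.exp_int_mul_two_pi_mul_I]
    simp [hζ]
  · have hζ : ep p c ≠ 1 := by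
      intro h1
      unfold ep at h1
      rw [Complex.exp_eq_one_iff] at h1
      obtain ⟨n, hn⟩ := h1
      apply h
      have hc : (c:ℂ) = p * n := by
        field_simp at hn
        exact mul_left_cancel₀ h2pi (by rw [hn] :
          (2*Real.pi*Complex.I) * (c:ℂ) = (2*Real.pi*Complex.I) * ((p:ℂ)*n))
      exact ⟨n, by exact_mod_cast hc⟩
    have hζp : (ep p c)^p = 1 := by
      rw [← ep_pow]
      unfold ep
      have : (2*Real.pi*Complex.I*((c*p:ℤ):ℂ))/p = (c:ℂ)*(2*Real.pi*Complex.I) := by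
        push_cast; field_simp
      rw [this]
      exact Complex.exp_int_mul_two_pi_mul_I c
    rw [geom_sum_eq hζ, hζp]
    simp

theorem stmt11 (C : ℝ) :
    ∃ C' : ℝ, 0 < C' ∧
      ∀ (p T K : ℕ) (g a : ℤ) (L : Finset ℕ) (φ : ℕ → ℂ) (Φ : ℝ),
        p.Prime → Int.gcd g p = 1 → Int.gcd a p = 1 →
        T = orderOf ((g : ZMod p)) →
        L.card ≤ K → K ≤ T →
        (∃ s : ℕ, L ⊆ Finset.Icc (s + 1) (s + K)) →
        L ⊆ Finset.Icc 1 T →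
        (∀ x ∈ L, ‖φ x‖ ≤ Φ) →
        (addEnergy p g K : ℝ) ≤ C * (K : ℝ) ^ ((5 : ℝ) / 2) →
        ∑ m ∈ Finset.range p, ‖∑ x ∈ L, φ x * ep p (a * m * g ^ x)‖ ^ 4 ≤
          C' * p * Φ ^ 4 * (K : ℝ) ^ ((5 : ℝ) / 2) := by
  refine ⟨max C 1, lt_of_lt_of_le one_pos (le_max_right C 1), ?_⟩
  intro p T K g a L φ Φ hp hg ha hT hLK hKT hs hLT hφ hE
  obtain ⟨s, hLs⟩ := hs
  haveI := Fact.mk hp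
  have hp1 : 0 < p := hp.pos
  have hC'0 : (0:ℝ) ≤ max C 1 := le_trans zero_le_one (le_max_right C 1)
  have hK0 : (0:ℝ) ≤ (K:ℝ) ^ ((5:ℝ)/2) := Real.rpow_nonneg (Nat.cast_nonneg K) _
  -- trivial case L = ∅
  rcases L.eq_empty_or_nonempty with hL | hL
  · simp only [hL, Finset.sum_empty, norm_zero]
    have : (0:ℝ) ≤ max C 1 * p * Φ^4 * (K:ℝ)^((5:ℝ)/2) := by
      apply mul_nonneg
      apply mul_nonneg
      apply mul_nonneg hC'0 (Nat.cast_nonneg p)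
      · positivity
      · exact hK0
    simpa using this
  have hΦ0 : 0 ≤ Φ := by
    obtain ⟨x0, hx0⟩ := hL
    exact le_trans (norm_nonneg _) (hφ x0 hx0)
  -- g not 0 mod p
  have hgz : (g : ZMod p) ≠ 0 := by
    rw [Ne, ZMod.intCast_zmod_eq_zero_iff_dvd]
    intro hdvd
    have h1 : (p:ℤ) ∣ (Int.gcd g p : ℤ) := by exact_mod_cast Int.dvd_gcd hdvd dvd_rfl
    rw [hg] at h1
    have h2 := Int.le_of_dvd one_pos h1
    have h3 := hp.two_le
    omega
  have haz : ¬ ((p:ℤ) ∣ a) := by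
    intro hdvd
    have h1 : (p:ℤ) ∣ (Int.gcd a p : ℤ) := by exact_mod_cast Int.dvd_gcd hdvd dvd_rfl
    rw [ha] at h1
    have h2 := Int.le_of_dvd one_pos h1
    have h3 := hp.two_le
    omega
  have hpZ : Prime (p:ℤ) := Nat.prime_iff_prime_int.mp hp
  -- divisibility criterion
  have hdvd_iff : ∀ x1 x2 x3 x4 : ℕ,
      ((p:ℤ) ∣ a * (g^x1 + g^x2 - g^x3 - g^x4)) ↔
        ((g:ZMod p)^x1 + (g:ZMod p)^x2 = (g:ZMod p)^x3 + (g:ZMod p)^x4) := by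
    intro x1 x2 x3 x4
    rw [hpZ.dvd_mul]
    constructor
    · rintro (h | h)
      · exact absurd h haz
      · have : ((g^x1 + g^x2 - g^x3 - g^x4 : ℤ) : ZMod p) = 0 :=
          (ZMod.intCast_zmod_eq_zero_iff_dvd _ _).mpr h
        push_cast at this
        linear_combination this
    · intro h
      right
      rw [← ZMod.intCast_zmod_eq_zero_iff_dvd]
      push_cast
      linear_combination h
  -- step 1 : fourth power as re of product
  set S : ℕ → ℂ := fun m => ∑ x ∈ L, φ x * ep p (a * m * g ^ x) with hS
  have step1 : ∀ m : ℕ, ‖S m‖ ^ 4 =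
      (S m * S m * (starRingEnd ℂ) (S m) * (starRingEnd ℂ) (S m)).re := by
    intro m
    have h1 : S m * (starRingEnd ℂ) (S m) = ((‖S m‖^2 : ℝ) : ℂ) := by
      rw [Complex.mul_conj]
      norm_cast
      rw [Complex.normSq_eq_norm_sq]
    have : S m * S m * (starRingEnd ℂ) (S m) * (starRingEnd ℂ) (S m)
        = ((‖S m‖^2 : ℝ) : ℂ) * ((‖S m‖^2 : ℝ) : ℂ) := by
      rw [← h1]; ring
    rw [this, ← Complex.ofReal_mul, Complex.ofReal_re]
    ring
  -- step 2 : expansion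
  have expand : ∀ m : ℕ, S m * S m * (starRingEnd ℂ) (S m) * (starRingEnd ℂ) (S m) =
      ∑ x4 ∈ L, ∑ x3 ∈ L, ∑ x2 ∈ L, ∑ x1 ∈ L,
        (φ x1 * φ x2 * (starRingEnd ℂ) (φ x3) * (starRingEnd ℂ) (φ x4)) *
          ep p (a * (g^x1 + g^x2 - g^x3 - g^x4) * m) := by
    intro m
    rw [hS]
    simp only [map_sum, Finset.sum_mul, Finset.mul_sum, map_mul]
    refine Finset.sum_congr rfl fun x4 _ => Finset.sum_congr rfl fun x3 _ =>
      Finset.sum_congr rfl fun x2 _ => Finset.sum_congr rfl fun x1 _ => ?_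
    rw [ep_conj, ep_conj, show a * (g^x1 + g^x2 - g^x3 - g^x4) * (m:ℤ) =
      (a * m * g^x1) + ((a * m * g^x2) + ((-(a * m * g^x3)) + (-(a * m * g^x4)))) from by ring,
      ep_add, ep_add, ep_add]
    ring
  -- step 3 : orthogonality
  have main : ∑ m ∈ Finset.range p, S m * S m * (starRingEnd ℂ) (S m) * (starRingEnd ℂ) (S m) =
      ∑ x4 ∈ L, ∑ x3 ∈ L, ∑ x2 ∈ L, ∑ x1 ∈ L,
        (φ x1 * φ x2 * (starRingEnd ℂ) (φ x3) * (starRingEnd ℂ) (φ x4)) *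
          (if (p:ℤ) ∣ a * (g^x1 + g^x2 - g^x3 - g^x4) then (p:ℂ) else 0) := by
    rw [Finset.sum_congr rfl (fun m _ => expand m)]
    rw [Finset.sum_comm]
    refine Finset.sum_congr rfl fun x4 _ => ?_
    rw [Finset.sum_comm]
    refine Finset.sum_congr rfl fun x3 _ => ?_
    rw [Finset.sum_comm]
    refine Finset.sum_congr rfl fun x2 _ => ?_
    rw [Finset.sum_comm]
    refine Finset.sum_congr rfl fun x1 _ => ?_
    rw [← Finset.mul_sum, ep_orth p hp1]
  -- rewrite LHS as real part
  have hre : ∑ m ∈ Finset.range p, ‖S m‖ ^ 4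
      = (∑ m ∈ Finset.range p, S m * S m * (starRingEnd ℂ) (S m) * (starRingEnd ℂ) (S m)).re := by
    rw [Complex.re_sum]
    exact Finset.sum_congr rfl fun m _ => step1 m
  rw [hre, main]
  -- bound the real part by absolute values
  have habs : (∑ x4 ∈ L, ∑ x3 ∈ L, ∑ x2 ∈ L, ∑ x1 ∈ L,
      (φ x1 * φ x2 * (starRingEnd ℂ) (φ x3) * (starRingEnd ℂ) (φ x4)) *
        (if (p:ℤ) ∣ a * (g^x1 + g^x2 - g^x3 - g^x4) then (p:ℂ) else 0)).re ≤
      ∑ x4 ∈ L, ∑ x3 ∈ L, ∑ x2 ∈ L, ∑ x1 ∈ L, Φ^4 *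
        (if (g:ZMod p)^x1 + (g:ZMod p)^x2 = (g:ZMod p)^x3 + (g:ZMod p)^x4 then (p:ℝ) else 0) := by
    refine le_trans (Complex.re_le_norm _) ?_
    refine le_trans (norm_sum_le _ _) (Finset.sum_le_sum fun x4 hx4 => ?_)
    refine le_trans (norm_sum_le _ _) (Finset.sum_le_sum fun x3 hx3 => ?_)
    refine le_trans (norm_sum_le _ _) (Finset.sum_le_sum fun x2 hx2 => ?_)
    refine le_trans (norm_sum_le _ _) (Finset.sum_le_sum fun x1 hx1 => ?_)
    rw [norm_mul]
    have h1 : ‖φ x1 * φ x2 * (starRingEnd ℂ) (φ x3) * (starRingEnd ℂ) (φ x4)‖ ≤ Φ^4 := by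
      rw [norm_mul, norm_mul, norm_mul, RCLike.norm_conj, RCLike.norm_conj]
      have b1 := hφ x1 hx1
      have b2 := hφ x2 hx2
      have b3 := hφ x3 hx3
      have b4 := hφ x4 hx4
      have : Φ^4 = Φ*Φ*Φ*Φ := by ring
      rw [this]
      exact mul_le_mul (mul_le_mul (mul_le_mul b1 b2 (norm_nonneg _) hΦ0) b3
        (norm_nonneg _) (by positivity)) b4 (norm_nonneg _) (by positivity)
    have h2 : ‖(if (p:ℤ) ∣ a * (g^x1 + g^x2 - g^x3 - g^x4) then (p:ℂ) else 0)‖ =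
        (if (g:ZMod p)^x1 + (g:ZMod p)^x2 = (g:ZMod p)^x3 + (g:ZMod p)^x4 then (p:ℝ) else 0) := by
      simp only [hdvd_iff]
      split_ifs
      · simp
      · simp
    rw [h2]
    refine mul_le_mul h1 le_rfl ?_ (by positivity)
    positivity
  refine le_trans habs ?_
  -- convert nested indicator sum to a cardinality
  have hsum_eq : ∑ x4 ∈ L, ∑ x3 ∈ L, ∑ x2 ∈ L, ∑ x1 ∈ L, Φ^4 *
        (if (g:ZMod p)^x1 + (g:ZMod p)^x2 = (g:ZMod p)^x3 + (g:ZMod p)^x4 then (p:ℝ) else 0)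
      = Φ^4 * ((p:ℝ) * (((L ×ˢ L ×ˢ L ×ˢ L).filter (fun q : ℕ×ℕ×ℕ×ℕ =>
          (g:ZMod p)^q.2.2.2 + (g:ZMod p)^q.2.2.1 = (g:ZMod p)^q.2.1 + (g:ZMod p)^q.1)).card)) := by
    have h1 : ∑ q ∈ (L ×ˢ L ×ˢ L ×ˢ L), (Φ^4 * (if (g:ZMod p)^q.2.2.2 + (g:ZMod p)^q.2.2.1
          = (g:ZMod p)^q.2.1 + (g:ZMod p)^q.1 then (p:ℝ) else 0))
        = ∑ x4 ∈ L, ∑ x3 ∈ L, ∑ x2 ∈ L, ∑ x1 ∈ L, Φ^4 *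
        (if (g:ZMod p)^x1 + (g:ZMod p)^x2 = (g:ZMod p)^x3 + (g:ZMod p)^x4 then (p:ℝ) else 0) := by
      simp only [Finset.sum_product]
    rw [← h1, ← Finset.mul_sum, ← Finset.sum_filter, Finset.sum_const, nsmul_eq_mul]
    ring
  rw [hsum_eq]
  -- cardinality bounded by addEnergy
  have hcard : (((L ×ˢ L ×ˢ L ×ˢ L).filter (fun q : ℕ×ℕ×ℕ×ℕ =>
      (g:ZMod p)^q.2.2.2 + (g:ZMod p)^q.2.2.1 = (g:ZMod p)^q.2.1 + (g:ZMod p)^q.1)).card : ℝ)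
      ≤ (addEnergy p g K : ℝ) := by
    have hmain : ((L ×ˢ L ×ˢ L ×ˢ L).filter (fun q : ℕ×ℕ×ℕ×ℕ =>
        (g:ZMod p)^q.2.2.2 + (g:ZMod p)^q.2.2.1 = (g:ZMod p)^q.2.1 + (g:ZMod p)^q.1)).card
        ≤ addEnergy p g K := by
      unfold _root_.addEnergy
      apply Finset.card_le_card_of_injOn
        (fun q => (q.2.2.2 - s, q.2.2.1 - s, q.2.1 - s, q.1 - s))
      · intro q hq
        simp only [Finset.mem_coe, Finset.mem_filter, Finset.mem_product] at hq ⊢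
        obtain ⟨⟨h4, h3, h2, h1⟩, hrel⟩ := hq
        have hb : ∀ x : ℕ, x ∈ L → s + 1 ≤ x ∧ x ≤ s + K := by
          intro x hx
          have := hLs hx
          simpa [Finset.mem_Icc] using this
        have hb1 := hb _ h1; have hb2 := hb _ h2; have hb3 := hb _ h3; have hb4 := hb _ h4
        refine ⟨⟨?_, ?_, ?_, ?_⟩, ?_⟩
        · simp [Finset.mem_Icc]; omega
        · simp [Finset.mem_Icc]; omega
        · simp [Finset.mem_Icc]; omega
        · simp [Finset.mem_Icc]; omega
        · have hu : (g:ZMod p)^s ≠ 0 := pow_ne_zero _ hgz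
          have hx : ∀ x : ℕ, x ∈ L → (g:ZMod p)^x = (g:ZMod p)^(x-s) * (g:ZMod p)^s := by
            intro x hx
            rw [← pow_add]
            congr 1
            have := hb _ hx
            omega
          refine mul_right_cancel₀ hu ?_
          rw [add_mul, add_mul, ← hx _ h1, ← hx _ h2, ← hx _ h3, ← hx _ h4]
          exact hrel
      · intro q hq q' hq' heq
        simp only [Finset.coe_filter, Set.mem_setOf_eq, Finset.mem_product] at hq hq'
        obtain ⟨⟨h4, h3, h2, h1⟩, -⟩ := hq
        obtain ⟨⟨h4', h3', h2', h1'⟩, -⟩ := hq'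
        have hb : ∀ x : ℕ, x ∈ L → s + 1 ≤ x := by
          intro x hx
          have := hLs hx
          simp [Finset.mem_Icc] at this
          omega
        have hb1 := hb _ h1; have hb2 := hb _ h2; have hb3 := hb _ h3; have hb4 := hb _ h4
        have hb1' := hb _ h1'; have hb2' := hb _ h2'; have hb3' := hb _ h3'; have hb4' := hb _ h4'
        rcases q with ⟨a1, a2, a3, a4⟩
        rcases q' with ⟨b1, b2, b3, b4⟩
        simp only [Prod.mk.injEq] at heq ⊢
        simp only at hb1 hb2 hb3 hb4 hb1' hb2' hb3' hb4'
        omega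
    exact_mod_cast hmain
  -- finish
  have hfin : Φ^4 * ((p:ℝ) * ((((L ×ˢ L ×ˢ L ×ˢ L).filter (fun q : ℕ×ℕ×ℕ×ℕ =>
        (g:ZMod p)^q.2.2.2 + (g:ZMod p)^q.2.2.1 = (g:ZMod p)^q.2.1 + (g:ZMod p)^q.1)).card : ℝ)))
      ≤ Φ^4 * ((p:ℝ) * (C * (K:ℝ)^((5:ℝ)/2))) := by
    refine mul_le_mul_of_nonneg_left (mul_le_mul_of_nonneg_left (le_trans hcard hE)
      (Nat.cast_nonneg p)) (by positivity)
  refine le_trans hfin ?_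
  have hC : C ≤ max C 1 := le_max_left C 1
  have hrest : (0:ℝ) ≤ (p:ℝ) * Φ^4 * (K:ℝ)^((5:ℝ)/2) := by positivity
  nlinarith [mul_le_mul_of_nonneg_right hC hrest]
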